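/- Let n, M, L ∈ ℕ with L ≥ 1, let s̄ ∈ [0,1), and for j ∈ {1,…,M} let g_j : ℝ^n → ℝ be multilinear functions satisfying g_j(x) ∈ [0, s̄] for all x ∈ {0,1}^n. Define the caching gain f(x) = ∑_{j=1}^M g_j(0)/(1 − g_j(0)) − ∑_{j=1}^M g_j(x)/(1 − g_j(x)) and its polynomial estimator f̂_L(x) = ∑_{j=1}^M ĥ_L(g_j(0)) − ∑_{j=1}^M ĥ_L(g_j(x)), where ĥ_L(s) = ∑_{ℓ=1}^L s^ℓ. Let G and Ĝ_L be the multilinear extensions of f and f̂_L restricted to {0,1}^n, with gradients ∇G(y)_i = G([y]_{+i}) − G([y]_{−i}) and similarly for Ĝ_L. Then for every y ∈ [0,1]^n, ‖∇G(y) − ∇Ĝ_L(y)‖₂ ≤ 2M√n · s̄^{L+1}/(1 − s̄). -/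
import Mathlib


/-- The indicator vector of a subset `S` of `{1,…,n}`, viewed as a point of `{0,1}^n ⊆ ℝ^n`. -/
noncomputable def ind {n : ℕ} (S : Finset (Fin n)) : Fin n → ℝ :=
  fun i => if i ∈ S then 1 else 0

/-- `∏_{i∈S} y_i ∏_{i∉S} (1 - y_i)`. -/
noncomputable def wt {n : ℕ} (y : Fin n → ℝ) (S : Finset (Fin n)) : ℝ :=
  (∏ i ∈ S, y i) * ∏ i ∈ Sᶜ, (1 - y i)

/-- The multilinear extension `G(y) = ∑_{x∈{0,1}^n} f(x) ∏_{i:x_i=1} y_i ∏_{i:x_i=0}(1-y_i)`. -/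
noncomputable def mlext {n : ℕ} (f : (Fin n → ℝ) → ℝ) (y : Fin n → ℝ) : ℝ :=
  ∑ S : Finset (Fin n), f (ind S) * wt y S

/-- `∇G(y)_i = G([y]_{+i}) - G([y]_{-i})`. -/
noncomputable def gradML {n : ℕ} (f : (Fin n → ℝ) → ℝ) (y : Fin n → ℝ) (i : Fin n) : ℝ :=
  mlext f (Function.update y i 1) - mlext f (Function.update y i 0)

/-- Euclidean norm on `ℝ^n`. -/
noncomputable def norm2 {n : ℕ} (v : Fin n → ℝ) : ℝ :=
  Real.sqrt (∑ i, v i ^ 2)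


lemma phi_eq (L : ℕ) (s : ℝ) (hs : s ≠ 1) :
    s / (1 - s) - ∑ ℓ ∈ Finset.Icc 1 L, s ^ ℓ = s ^ (L + 1) / (1 - s) := by
  have h1 : (1 : ℝ) - s ≠ 0 := by
    intro h; apply hs; linarith
  induction L with
  | zero => simp
  | succ L ih =>
    rw [Finset.sum_Icc_succ_top (by omega)]
    have : s / (1 - s) - ∑ ℓ ∈ Finset.Icc 1 L, s ^ ℓ - s ^ (L + 1) =
        s ^ (L + 1) / (1 - s) - s ^ (L + 1) := by rw [← ih]
    rw [show s / (1 - s) - (∑ ℓ ∈ Finset.Icc 1 L, s ^ ℓ + s ^ (L + 1)) =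
        s / (1 - s) - ∑ ℓ ∈ Finset.Icc 1 L, s ^ ℓ - s ^ (L + 1) from by ring, this]
    field_simp
    ring

lemma wt_nonneg {n : ℕ} {y : Fin n → ℝ} (hy : ∀ i, y i ∈ Set.Icc (0:ℝ) 1)
    (S : Finset (Fin n)) : 0 ≤ wt y S := by
  unfold wt
  apply mul_nonneg
  · exact Finset.prod_nonneg fun i _ => (hy i).1
  · exact Finset.prod_nonneg fun i _ => by linarith [(hy i).2]

lemma sum_wt {n : ℕ} (y : Fin n → ℝ) : ∑ S : Finset (Fin n), wt y S = 1 := by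
  have h := Finset.prod_add (f := y) (g := fun i => 1 - y i) (s := Finset.univ)
  simp only [Finset.powerset_univ] at h
  have : ∀ S : Finset (Fin n), (∏ i ∈ S, y i) * ∏ i ∈ Finset.univ \ S, (1 - y i) = wt y S := by
    intro S; rw [wt, Finset.compl_eq_univ_sdiff]
  simp only [this] at h
  rw [← h]
  simp

lemma mlext_abs_le {n : ℕ} (h : (Fin n → ℝ) → ℝ) (y : Fin n → ℝ)
    (hy : ∀ i, y i ∈ Set.Icc (0:ℝ) 1) (B : ℝ)
    (hb : ∀ S : Finset (Fin n), |h (ind S)| ≤ B) :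
    |mlext h y| ≤ B := by
  calc |mlext h y| ≤ ∑ S : Finset (Fin n), |h (ind S) * wt y S| :=
        Finset.abs_sum_le_sum_abs _ _
    _ = ∑ S : Finset (Fin n), |h (ind S)| * wt y S := by
        refine Finset.sum_congr rfl fun S _ => ?_
        rw [abs_mul, abs_of_nonneg (wt_nonneg hy S)]
    _ ≤ ∑ S : Finset (Fin n), B * wt y S := by
        exact Finset.sum_le_sum fun S _ =>
          mul_le_mul_of_nonneg_right (hb S) (wt_nonneg hy S)
    _ = B := by rw [← Finset.mul_sum, sum_wt, mul_one]

/-- for the caching-gain objective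
`f(x) = ∑_j g_j(0)/(1-g_j(0)) - ∑_j g_j(x)/(1-g_j(x))`, where the `g_j` are multilinear with
values in `[0, s̄]` on `{0,1}^n`, and its polynomial estimator
`f̂_L(x) = ∑_j ĥ_L(g_j(0)) - ∑_j ĥ_L(g_j(x))` with `ĥ_L(s) = ∑_{ℓ=1}^L s^ℓ`, the gradients
of the multilinear extensions satisfy
`‖∇G(y) - ∇Ĝ_L(y)‖₂ ≤ 2M√n · s̄^{L+1}/(1-s̄)` for all `y ∈ [0,1]^n`. -/
theorem caching_bias_bound {n M : ℕ} (L : ℕ) (hL : 1 ≤ L)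
    (sbar : ℝ) (hsbar : sbar ∈ Set.Ico (0 : ℝ) 1)
    (g : Fin M → (Fin n → ℝ) → ℝ)
    (hml : ∀ j : Fin M, ∃ (k : ℕ) (c : Fin k → ℝ) (J : Fin k → Finset (Fin n)),
      ∀ x : Fin n → ℝ, g j x = ∑ ℓ, c ℓ * ∏ i ∈ J ℓ, x i)
    (hrange : ∀ (j : Fin M) (x : Fin n → ℝ), (∀ i, x i = 0 ∨ x i = 1) →
      g j x ∈ Set.Icc 0 sbar)
    (f fhat : (Fin n → ℝ) → ℝ)
    (hf : ∀ x : Fin n → ℝ, f x =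
      (∑ j : Fin M, g j (fun _ => 0) / (1 - g j (fun _ => 0)))
        - ∑ j : Fin M, g j x / (1 - g j x))
    (hfhat : ∀ x : Fin n → ℝ, fhat x =
      (∑ j : Fin M, ∑ ℓ ∈ Finset.Icc 1 L, g j (fun _ => 0) ^ ℓ)
        - ∑ j : Fin M, ∑ ℓ ∈ Finset.Icc 1 L, g j x ^ ℓ)
    (y : Fin n → ℝ) (hy : ∀ i, y i ∈ Set.Icc (0 : ℝ) 1) :
    norm2 (fun i => gradML f y i - gradML fhat y i) ≤
      2 * (M : ℝ) * Real.sqrt (n : ℝ) * sbar ^ (L + 1) / (1 - sbar) := by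
  obtain ⟨hs0, hs1⟩ := hsbar
  have hden : (0 : ℝ) < 1 - sbar := by linarith
  set B : ℝ := sbar ^ (L + 1) / (1 - sbar) with hB
  have hB0 : 0 ≤ B := div_nonneg (pow_nonneg hs0 _) hden.le
  -- φ(s) := s/(1-s) - ∑_{ℓ=1}^L s^ℓ = s^{L+1}/(1-s) ∈ [0, B] for s ∈ [0, sbar]
  have hphi : ∀ s : ℝ, s ∈ Set.Icc 0 sbar →
      (s / (1 - s) - ∑ ℓ ∈ Finset.Icc 1 L, s ^ ℓ) ∈ Set.Icc 0 B := by
    intro s ⟨h0, h1⟩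
    have hslt : s < 1 := lt_of_le_of_lt h1 hs1
    rw [phi_eq L s hslt.ne]
    constructor
    · exact div_nonneg (pow_nonneg h0 _) (by linarith)
    · exact div_le_div₀ (pow_nonneg hs0 _) (pow_le_pow_left₀ h0 h1 _) hden (by linarith)
  -- pointwise bound on f - fhat over {0,1}^n
  have key : ∀ x : Fin n → ℝ, (∀ i, x i = 0 ∨ x i = 1) →
      |f x - fhat x| ≤ M * B := by
    intro x hx
    have hzero : ∀ i : Fin n, (fun _ : Fin n => (0:ℝ)) i = 0 ∨ (fun _ : Fin n => (0:ℝ)) i = 1 :=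
      fun i => Or.inl rfl
    have hdiff : f x - fhat x =
        (∑ j : Fin M, (g j (fun _ => 0) / (1 - g j (fun _ => 0))
            - ∑ ℓ ∈ Finset.Icc 1 L, g j (fun _ => 0) ^ ℓ))
        - ∑ j : Fin M, (g j x / (1 - g j x) - ∑ ℓ ∈ Finset.Icc 1 L, g j x ^ ℓ) := by
      rw [hf, hfhat]
      rw [Finset.sum_sub_distrib, Finset.sum_sub_distrib]
      ring
    rw [hdiff]
    have h1 : ∀ j : Fin M, (g j (fun _ => 0) / (1 - g j (fun _ => 0))
        - ∑ ℓ ∈ Finset.Icc 1 L, g j (fun _ => 0) ^ ℓ) ∈ Set.Icc 0 B :=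
      fun j => hphi _ (hrange j _ hzero)
    have h2 : ∀ j : Fin M, (g j x / (1 - g j x)
        - ∑ ℓ ∈ Finset.Icc 1 L, g j x ^ ℓ) ∈ Set.Icc 0 B :=
      fun j => hphi _ (hrange j _ hx)
    rw [abs_le]
    constructor
    · have hb1 : (0:ℝ) ≤ ∑ j : Fin M, (g j (fun _ => 0) / (1 - g j (fun _ => 0))
          - ∑ ℓ ∈ Finset.Icc 1 L, g j (fun _ => 0) ^ ℓ) :=
        Finset.sum_nonneg fun j _ => (h1 j).1
      have hb2 : ∑ j : Fin M, (g j x / (1 - g j x)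
          - ∑ ℓ ∈ Finset.Icc 1 L, g j x ^ ℓ) ≤ M * B := by
        calc _ ≤ ∑ _j : Fin M, B := Finset.sum_le_sum fun j _ => (h2 j).2
          _ = M * B := by simp [Finset.sum_const, mul_comm]
      linarith
    · have hb1 : ∑ j : Fin M, (g j (fun _ => 0) / (1 - g j (fun _ => 0))
          - ∑ ℓ ∈ Finset.Icc 1 L, g j (fun _ => 0) ^ ℓ) ≤ M * B := by
        calc _ ≤ ∑ _j : Fin M, B := Finset.sum_le_sum fun j _ => (h1 j).2
          _ = M * B := by simp [Finset.sum_const, mul_comm]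
      have hb2 : (0:ℝ) ≤ ∑ j : Fin M, (g j x / (1 - g j x)
          - ∑ ℓ ∈ Finset.Icc 1 L, g j x ^ ℓ) :=
        Finset.sum_nonneg fun j _ => (h2 j).1
      linarith
  -- coordinates of ind S are 0 or 1
  have hind : ∀ S : Finset (Fin n), ∀ i, ind S i = 0 ∨ ind S i = 1 := by
    intro S i; unfold ind; by_cases h : i ∈ S <;> simp [h]
  -- mlext of the difference
  have hmldiff : ∀ z : Fin n → ℝ, mlext f z - mlext fhat z
      = mlext (fun x => f x - fhat x) z := by
    intro z
    unfold mlext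
    rw [← Finset.sum_sub_distrib]
    exact Finset.sum_congr rfl fun S _ => by ring
  have hmlbd : ∀ z : Fin n → ℝ, (∀ i, z i ∈ Set.Icc (0:ℝ) 1) →
      |mlext f z - mlext fhat z| ≤ M * B := by
    intro z hz
    rw [hmldiff]
    exact mlext_abs_le _ z hz _ (fun S => key (ind S) (hind S))
  -- coordinatewise gradient bound
  have hcoord : ∀ i : Fin n, |gradML f y i - gradML fhat y i| ≤ 2 * (M * B) := by
    intro i
    have hup : ∀ c : ℝ, c ∈ Set.Icc (0:ℝ) 1 →
        ∀ k, Function.update y i c k ∈ Set.Icc (0:ℝ) 1 := by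
      intro c hc k
      rw [Function.update_apply]
      by_cases h : k = i <;> simp [h, hc, hy k]
    have h1 := hmlbd (Function.update y i 1) (hup 1 (by norm_num))
    have h0 := hmlbd (Function.update y i 0) (hup 0 (by norm_num))
    unfold gradML
    rw [abs_le] at h1 h0 ⊢
    constructor <;> [nlinarith [h1.1, h0.2]; nlinarith [h1.2, h0.1]]
  -- assemble via norm2
  have hMB : (0:ℝ) ≤ 2 * (M * B) := by positivity
  have hsum : ∑ i : Fin n, (gradML f y i - gradML fhat y i) ^ 2
      ≤ n * (2 * (M * B)) ^ 2 := by
    calc ∑ i : Fin n, (gradML f y i - gradML fhat y i) ^ 2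
        ≤ ∑ _i : Fin n, (2 * (M * B)) ^ 2 := by
          refine Finset.sum_le_sum fun i _ => ?_
          have := hcoord i
          nlinarith [abs_nonneg (gradML f y i - gradML fhat y i),
            sq_abs (gradML f y i - gradML fhat y i)]
      _ = n * (2 * (M * B)) ^ 2 := by simp [Finset.sum_const, mul_comm]
  have : norm2 (fun i => gradML f y i - gradML fhat y i)
      ≤ Real.sqrt ((n : ℝ) * (2 * (M * B)) ^ 2) := by
    unfold norm2
    exact Real.sqrt_le_sqrt hsum
  calc norm2 (fun i => gradML f y i - gradML fhat y i)
      ≤ Real.sqrt ((n : ℝ) * (2 * (M * B)) ^ 2) := this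
    _ = Real.sqrt n * (2 * (M * B)) := by
        rw [Real.sqrt_mul (Nat.cast_nonneg n), Real.sqrt_sq hMB]
    _ = 2 * (M : ℝ) * Real.sqrt (n : ℝ) * sbar ^ (L + 1) / (1 - sbar) := by
        rw [hB]; ring
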